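/- arXiv:1905.06847 — 3 statements merged into one kernel-verified Lean document; each statement's English description precedes it below -/
import Mathlib

section
/- Let α be a type with decidable equality, let P and Q be finite sets over α, let I : α → Prop be an interpretation of elements as propositions, and let a, b : Prop. Then ((∀ p ∈ P, I p) ∧ a) ∨ ((∀ q ∈ Q, I q) ∧ b) is logically equivalent to (∀ x ∈ P ∩ Q, I x) ∧ (((∀ p ∈ P \ Q, I p) ∧ a) ∨ ((∀ q ∈ Q \ P, I q) ∧ b)). -/
/-- Core factoring identity of the FAR merge step: common preconditions can be
factored out of a disjunction of two conjunctive cases. -/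
theorem far_factoring {α : Type*} [DecidableEq α] (P Q : Finset α) (I : α → Prop)
    (a b : Prop) :
    (((∀ p ∈ P, I p) ∧ a) ∨ ((∀ q ∈ Q, I q) ∧ b)) ↔
      ((∀ x ∈ P ∩ Q, I x) ∧
        (((∀ p ∈ P \ Q, I p) ∧ a) ∨ ((∀ q ∈ Q \ P, I q) ∧ b))) := by
  simp only [Finset.mem_inter, Finset.mem_sdiff]
  constructor
  · rintro (⟨hP, ha⟩ | ⟨hQ, hb⟩)
    · exact ⟨fun x ⟨h, _⟩ => hP x h, Or.inl ⟨fun p ⟨h, _⟩ => hP p h, ha⟩⟩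
    · exact ⟨fun x ⟨_, h⟩ => hQ x h, Or.inr ⟨fun q ⟨h, _⟩ => hQ q h, hb⟩⟩
  · rintro ⟨hI, (⟨hP, ha⟩ | ⟨hQ, hb⟩)⟩
    · refine Or.inl ⟨fun p hp => ?_, ha⟩
      by_cases h : p ∈ Q
      · exact hI p ⟨hp, h⟩
      · exact hP p ⟨hp, h⟩
    · refine Or.inr ⟨fun q hq => ?_, hb⟩
      by_cases h : q ∈ P
      · exact hI q ⟨h, hq⟩
      · exact hQ q ⟨hq, h⟩
end

section
/- Let Expr be a type with decidable equality carrying a meaning function M : Expr → σ → σ → Prop, and let ~ be a sound equivalence relation on Expr (F ~ G implies M F s s' ↔ M G s s' for all s, s'). Let P and Q be finite sets of atomic formulas, let common = { l ∈ P | ∃ r ∈ Q, l ~ r } and removed = { r ∈ Q | ∃ l ∈ P, l ~ r }, and let a, b : Prop. Then for all states s and s': ((∀ p ∈ P, M p s s') ∧ a) ∨ ((∀ q ∈ Q, M q s s') ∧ b) is logically equivalent to (∀ c ∈ common, M c s s') ∧ (((∀ p ∈ P \ common, M p s s') ∧ a) ∨ ((∀ q ∈ Q \ removed, M q s s') ∧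 b)). -/
open Classical in
/-- Semantic justification of the FAR merge step: the disjunction of two cases equals
the factored form `common ∧ (L' ∨ R')`. -/
theorem far_merge_semantics {σ Expr : Type*} [DecidableEq Expr]
    (M : Expr → σ → σ → Prop) (sim : Expr → Expr → Prop)
    (hequiv : Equivalence sim)
    (hsound : ∀ F G : Expr, sim F G → ∀ s s' : σ, M F s s' ↔ M G s s')
    (P Q : Finset Expr) (a b : Prop) (s s' : σ) :
    (((∀ p ∈ P, M p s s') ∧ a) ∨ ((∀ q ∈ Q, M q s s') ∧ b)) ↔
      ((∀ c ∈ P.filter (fun l => ∃ r ∈ Q, sim l r), M c s s') ∧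
        (((∀ p ∈ P \ P.filter (fun l => ∃ r ∈ Q, sim l r), M p s s') ∧ a) ∨
          ((∀ q ∈ Q \ Q.filter (fun r => ∃ l ∈ P, sim l r), M q s s') ∧ b))) := by
  constructor
  · rintro (⟨hP, ha⟩ | ⟨hQ, hb⟩)
    · exact ⟨fun c hc => hP c (Finset.mem_filter.mp hc).1,
        Or.inl ⟨fun p hp => hP p (Finset.mem_sdiff.mp hp).1, ha⟩⟩
    · refine ⟨fun c hc => ?_, Or.inr ⟨fun q hq => hQ q (Finset.mem_sdiff.mp hq).1, hb⟩⟩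
      obtain ⟨hcP, r, hrQ, hsim⟩ := Finset.mem_filter.mp hc
      exact (hsound _ _ hsim s s').mpr (hQ r hrQ)
  · rintro ⟨hc, (⟨hP, ha⟩ | ⟨hQ, hb⟩)⟩
    · refine Or.inl ⟨fun p hp => ?_, ha⟩
      by_cases h : p ∈ P.filter (fun l => ∃ r ∈ Q, sim l r)
      · exact hc p h
      · exact hP p (Finset.mem_sdiff.mpr ⟨hp, h⟩)
    · refine Or.inr ⟨fun q hq => ?_, hb⟩
      by_cases h : q ∈ Q.filter (fun r => ∃ l ∈ P, sim l r)
      · obtain ⟨hqQ, l, hlP, hsim⟩ := Finset.mem_filter.mp h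
        have hlc : l ∈ P.filter (fun l => ∃ r ∈ Q, sim l r) :=
          Finset.mem_filter.mpr ⟨hlP, q, hqQ, hsim⟩
        exact (hsound _ _ hsim s s').mp (hc l hlc)
      · exact hQ q (Finset.mem_sdiff.mpr ⟨hq, h⟩)
end

section
/- Let Expr be a type with decidable equality carrying a meaning function M : Expr → σ → σ → Prop, and let ~ be a sound equivalence relation on Expr (F ~ G implies M F s s' ↔ M G s s' for all s, s'). Let L = (P_L, Q_L) and R = (P_R, Q_R) be specification cases, let common = { l ∈ P_L | ∃ r ∈ P_R, l ~ r } and removed = { r ∈ P_R | ∃ l ∈ P_L, l ~ r }, and let R' = (common ∪ (P_R \ removed), Q_R). Then for every finite set T of cases and every state transformer χ : σ → σ, χ satisfies the specification {L, R} ∪ T if and only if χ satisfies the specification {L, R'} ∪ T. -/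
/-- A state transformer `χ` satisfies a specification (a finite set of cases) if for
every pre-state `s` and every case `(P, Q)` whose preconditions all hold at `s`,
all the other clauses `Q` hold of `(s, χ s)`. -/
def SatisfiesSpec {σ Expr : Type*} (M : Expr → σ → σ → Prop) (χ : σ → σ)
    (S : Finset (Finset Expr × Finset Expr)) : Prop :=
  ∀ s : σ, ∀ c ∈ S, (∀ p ∈ c.1, M p s s) → ∀ q ∈ c.2, M q s (χ s)

open Classical in
/-- The FAR merge step preserves the set of satisfying programs: replacing the right
case's preconditions by the common preconditions of the left case together with the
right case's non-shared preconditions does not change satisfaction. -/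
theorem far_merge_preserves_satisfaction {σ Expr : Type*} [DecidableEq Expr]
    (M : Expr → σ → σ → Prop) (sim : Expr → Expr → Prop)
    (hequiv : Equivalence sim)
    (hsound : ∀ F G : Expr, sim F G → ∀ s s' : σ, M F s s' ↔ M G s s')
    (PL QL PR QR : Finset Expr)
    (T : Finset (Finset Expr × Finset Expr)) (χ : σ → σ) :
    (SatisfiesSpec M χ ({(PL, QL), (PR, QR)} ∪ T) ↔
      SatisfiesSpec M χ
        ({(PL, QL),
          ((PL.filter (fun l => ∃ r ∈ PR, sim l r)) ∪
            (PR \ PR.filter (fun r => ∃ l ∈ PL, sim l r)), QR)} ∪ T)) := by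
  set P' := (PL.filter (fun l => ∃ r ∈ PR, sim l r)) ∪
      (PR \ PR.filter (fun r => ∃ l ∈ PL, sim l r)) with hP'
  have key : ∀ s : σ, (∀ p ∈ PR, M p s s) ↔ (∀ p ∈ P', M p s s) := by
    intro s
    constructor
    · intro h p hp
      rw [hP', Finset.mem_union] at hp
      rcases hp with hp | hp
      · rw [Finset.mem_filter] at hp
        obtain ⟨_, r, hr, hsim⟩ := hp
        exact (hsound p r hsim s s).mpr (h r hr)
      · exact h p (Finset.mem_sdiff.mp hp).1
    · intro h p hp
      by_cases hrem : ∃ l ∈ PL, sim l p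
      · obtain ⟨l, hl, hsim⟩ := hrem
        have hlP' : l ∈ P' := by
          rw [hP', Finset.mem_union, Finset.mem_filter]
          exact Or.inl ⟨hl, p, hp, hsim⟩
        exact (hsound l p hsim s s).mp (h l hlP')
      · exact h p (by
          rw [hP', Finset.mem_union]
          exact Or.inr (Finset.mem_sdiff.mpr ⟨hp, by
            simp only [Finset.mem_filter]; exact fun h => hrem h.2⟩))
  constructor <;> intro hsat s c hc hpre q hq <;>
    simp only [Finset.mem_union, Finset.mem_insert, Finset.mem_singleton] at hc
  · rcases hc with (rfl | rfl) | hc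
    · exact hsat s (PL, QL) (by simp) hpre q hq
    · exact hsat s (PR, QR) (by simp) ((key s).mpr hpre) q hq
    · exact hsat s c (Finset.mem_union_right _ hc) hpre q hq
  · rcases hc with (rfl | rfl) | hc
    · exact hsat s (PL, QL) (by simp) hpre q hq
    · exact hsat s (P', QR) (by simp) ((key s).mp hpre) q hq
    · exact hsat s c (Finset.mem_union_right _ hc) hpre q hq
end
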